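/- arXiv:0908.2964 — 2 statements merged into one kernel-verified Lean document; each statement's English description precedes it below -/
import Mathlib

section
/- Negative-type inequality for C²[F_N]: for any density matrices ρ₁,…,ρₙ and real numbers c₁,…,cₙ with Σᵢ cᵢ = 0, one has Σᵢⱼ (1 − F_N(ρᵢ,ρⱼ)) cᵢcⱼ = −tr[(Σᵢ cᵢρᵢ)²] − (Σᵢ cᵢ√(1 − tr ρᵢ²))² ≤ 0. -/
open Matrix BigOperators ComplexOrder

/-- A density matrix: positive semidefinite with unit trace. -/
def IsDensity {n : Type*} [Fintype n] (ρ : Matrix n n ℂ) : Prop :=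
  ρ.PosSemidef ∧ ρ.trace = 1

/-- The alternative fidelity `F_N(ρ,σ) = tr(ρσ) + √(1 - tr ρ²)·√(1 - tr σ²)`. -/
noncomputable def FN {n : Type*} [Fintype n] (ρ σ : Matrix n n ℂ) : ℝ :=
  (ρ * σ).trace.re
    + Real.sqrt (1 - (ρ * ρ).trace.re) * Real.sqrt (1 - (σ * σ).trace.re)

/-! `1 - F_N(ρ, σ)` splits into the constant `1`, the Hilbert–Schmidt pairing `tr(ρσ)` and the
rank-one form `√(1 - tr ρ²)·√(1 - tr σ²)`. Against weights `c` with `Σ cᵢ = 0` the constant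
contributes nothing, and the two Gram forms contribute `-tr[(Σ cᵢρᵢ)²] ≤ 0` (the sum is Hermitian)
and `-(Σ cᵢ √(1 - tr ρᵢ²))² ≤ 0`. -/

namespace Matrix

variable {n ι : Type*} [Fintype ι]

theorem IsHermitian.re_trace_mul_self_nonneg [Fintype n] {A : Matrix n n ℂ} (hA : A.IsHermitian) :
    0 ≤ (A * A).trace.re := by
  have h := (posSemidef_conjTranspose_mul_self A).trace_nonneg
  rw [hA.eq] at h
  exact Complex.nonneg_iff.1 h |>.1

theorem isHermitian_sum_ofReal_smul {ρ : ι → Matrix n n ℂ} (hρ : ∀ i, (ρ i).IsHermitian)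
    (c : ι → ℝ) : (∑ i, (c i : ℂ) • ρ i).IsHermitian :=
  isSelfAdjoint_sum _ fun i _ => (hρ i).smul (Complex.conj_ofReal (c i))

theorem re_trace_sum_ofReal_smul_mul_self [Fintype n] (ρ : ι → Matrix n n ℂ) (c : ι → ℝ) :
    ((∑ i, (c i : ℂ) • ρ i) * (∑ i, (c i : ℂ) • ρ i)).trace.re
      = ∑ i, ∑ j, (ρ i * ρ j).trace.re * c i * c j := by
  simp only [Finset.sum_mul_sum, trace_sum, Complex.re_sum, Matrix.smul_mul, Matrix.mul_smul,
    trace_smul, smul_eq_mul, Complex.re_ofReal_mul]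
  exact Finset.sum_congr rfl fun i _ => Finset.sum_congr rfl fun j _ => by ring

end Matrix

theorem sum_sum_one_sub_FN_mul {n ι : Type*} [Fintype n] [Fintype ι]
    (ρ : ι → Matrix n n ℂ) (c : ι → ℝ) :
    ∑ i, ∑ j, (1 - FN (ρ i) (ρ j)) * c i * c j
      = (∑ i, c i) ^ 2 - ((∑ i, (c i : ℂ) • ρ i) * (∑ i, (c i : ℂ) • ρ i)).trace.re
        - (∑ i, c i * Real.sqrt (1 - (ρ i * ρ i).trace.re)) ^ 2 := by
  rw [re_trace_sum_ofReal_smul_mul_self, sq, sq, Finset.sum_mul_sum, Finset.sum_mul_sum,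
    ← Finset.sum_sub_distrib, ← Finset.sum_sub_distrib]
  refine Finset.sum_congr rfl fun i _ => ?_
  rw [← Finset.sum_sub_distrib, ← Finset.sum_sub_distrib]
  refine Finset.sum_congr rfl fun j _ => ?_
  rw [FN]
  ring

theorem stmt_6_general {n : Type*} [Fintype n] (N : ℕ)
    (ρ : Fin N → Matrix n n ℂ) (hρ : ∀ i, IsDensity (ρ i))
    (c : Fin N → ℝ) (hc : ∑ i, c i = 0) :
    (∑ i, ∑ j, (1 - FN (ρ i) (ρ j)) * c i * c j
        = -(((∑ i, (c i : ℂ) • ρ i) * (∑ i, (c i : ℂ) • ρ i)).trace.re)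
          - (∑ i, c i * Real.sqrt (1 - (ρ i * ρ i).trace.re)) ^ 2)
    ∧ ∑ i, ∑ j, (1 - FN (ρ i) (ρ j)) * c i * c j ≤ 0 := by
  have hexpand := sum_sum_one_sub_FN_mul ρ c
  rw [hc, sq 0, zero_mul, zero_sub] at hexpand
  have hnonneg := (isHermitian_sum_ofReal_smul (fun i => (hρ i).1.1) c).re_trace_mul_self_nonneg
  refine ⟨hexpand, ?_⟩
  rw [hexpand]
  linarith [sq_nonneg (∑ i, c i * Real.sqrt (1 - (ρ i * ρ i).trace.re))]

theorem stmt_6 {n : Type*} [Fintype n] [DecidableEq n] (N : ℕ)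
    (ρ : Fin N → Matrix n n ℂ) (hρ : ∀ i, IsDensity (ρ i))
    (c : Fin N → ℝ) (hc : ∑ i, c i = 0) :
    (∑ i, ∑ j, (1 - FN (ρ i) (ρ j)) * c i * c j
        = -(((∑ i, (c i : ℂ) • ρ i) * (∑ i, (c i : ℂ) • ρ i)).trace.re)
          - (∑ i, c i * Real.sqrt (1 - (ρ i * ρ i).trace.re)) ^ 2)
    ∧ ∑ i, ∑ j, (1 - FN (ρ i) (ρ j)) * c i * c j ≤ 0 :=
  stmt_6_general N ρ hρ c hc
end

section
/- Upper bound of the trace distance by F_N: for density matrices ρ and σ, D(ρ,σ) := ½‖ρ−σ‖_tr satisfies D(ρ,σ) ≤ √(r/2) · √(1 − F_N(ρ,σ)), where r = rank(ρ − σ). -/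
open Matrix BigOperators ComplexOrder

/-- The trace norm `‖A‖_tr = tr √(A†A)`, the sum of the singular values of `A`. -/
noncomputable def traceNorm {n : Type*} [Fintype n] [DecidableEq n]
    (A : Matrix n n ℂ) : ℝ :=
  (((Matrix.posSemidef_conjTranspose_mul_self A).1.eigenvectorUnitary : Matrix n n ℂ) *
      diagonal (((↑) : ℝ → ℂ) ∘ Real.sqrt ∘ (Matrix.posSemidef_conjTranspose_mul_self A).1.eigenvalues) *
      (star ((Matrix.posSemidef_conjTranspose_mul_self A).1.eigenvectorUnitary : Matrix n n ℂ))).trace.re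

/-!
Diagonalise the Hermitian matrix `ρ - σ`: its trace norm is the `ℓ¹` norm and its Hilbert–Schmidt
norm the `ℓ²` norm of its eigenvalues, so Cauchy–Schwarz over the `rank (ρ - σ)` nonzero
eigenvalues gives `‖ρ - σ‖_tr² ≤ rank (ρ - σ) · ‖ρ - σ‖_HS²`. Expanding the square,
`‖ρ - σ‖_HS² = tr ρ² + tr σ² - 2 tr ρσ`; as purities are at most `1`, AM–GM on
`√(1 - tr ρ²) √(1 - tr σ²)` bounds this by `2 (1 - F_N(ρ, σ))`.
-/

open Finset in
lemma sq_sum_abs_le_card_support_mul_sum_sq {ι : Type*} [Fintype ι] (f : ι → ℝ) :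
    (∑ i, |f i|) ^ 2 ≤ #{i | f i ≠ 0} * ∑ i, f i ^ 2 := by
  have hsupp : ∑ i, |f i| = ∑ i with f i ≠ 0, |f i| :=
    (sum_filter_of_ne fun i _ hi => by simpa using hi).symm
  calc (∑ i, |f i|) ^ 2
      ≤ #{i | f i ≠ 0} * ∑ i with f i ≠ 0, |f i| ^ 2 := hsupp ▸ sq_sum_le_card_mul_sum_sq
    _ ≤ #{i | f i ≠ 0} * ∑ i, f i ^ 2 := by
      simp only [sq_abs]
      exact mul_le_mul_of_nonneg_left
        (sum_le_sum_of_subset_of_nonneg (subset_univ _) fun i _ _ => sq_nonneg _) (by positivity)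

namespace Matrix

variable {n : Type*} [Fintype n] [DecidableEq n]

lemma IsHermitian.trace_cfc {𝕜 : Type*} [RCLike 𝕜] {A : Matrix n n 𝕜} (hA : A.IsHermitian)
    (f : ℝ → ℝ) : (cfc f A).trace = ∑ i, (f (hA.eigenvalues i) : 𝕜) := by
  rw [hA.cfc_eq, IsHermitian.cfc, Unitary.conjStarAlgAut_apply, trace_mul_cycle,
    Unitary.coe_star_mul_self, one_mul, trace_diagonal]
  rfl

lemma IsHermitian.re_trace_cfc {A : Matrix n n ℂ} (hA : A.IsHermitian) (f : ℝ → ℝ) :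
    (cfc f A).trace.re = ∑ i, f (hA.eigenvalues i) := by
  simp only [hA.trace_cfc, Complex.re_sum, Complex.coe_algebraMap, Complex.ofReal_re]

lemma IsHermitian.re_trace_mul_self {A : Matrix n n ℂ} (hA : A.IsHermitian) :
    (A * A).trace.re = ∑ i, hA.eigenvalues i ^ 2 := by
  rw [← sq, ← cfc_pow_id (R := ℝ) A 2 hA.isSelfAdjoint, hA.re_trace_cfc]

lemma traceNorm_eq_re_trace_cfc_sqrt (A : Matrix n n ℂ) :
    traceNorm A = (cfc Real.sqrt (Aᴴ * A)).trace.re := by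
  rw [(posSemidef_conjTranspose_mul_self A).1.cfc_eq]
  rfl

lemma IsHermitian.traceNorm_eq_sum_abs_eigenvalues {A : Matrix n n ℂ} (hA : A.IsHermitian) :
    traceNorm A = ∑ i, |hA.eigenvalues i| := by
  have hsq : Aᴴ * A = cfc (· ^ 2 : ℝ → ℝ) A := by
    rw [cfc_pow_id A 2 hA.isSelfAdjoint, hA.eq, sq]
  have hsqrt : cfc Real.sqrt (Aᴴ * A) = cfc (|·| : ℝ → ℝ) A := by
    rw [hsq, ← cfc_comp Real.sqrt (· ^ 2) A hA.isSelfAdjoint]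
    simp only [Function.comp_def, Real.sqrt_sq_eq_abs]
  rw [traceNorm_eq_re_trace_cfc_sqrt, hsqrt, hA.re_trace_cfc]

lemma IsHermitian.traceNorm_sq_le_rank_mul_re_trace_mul_self {A : Matrix n n ℂ}
    (hA : A.IsHermitian) : traceNorm A ^ 2 ≤ A.rank * (A * A).trace.re := by
  rw [hA.traceNorm_eq_sum_abs_eigenvalues, hA.re_trace_mul_self, hA.rank_eq_card_non_zero_eigs,
    Fintype.card_subtype]
  exact sq_sum_abs_le_card_support_mul_sum_sq _

end Matrix

lemma IsDensity.re_trace_mul_self_le_one {n : Type*} [Fintype n] [DecidableEq n]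
    {ρ : Matrix n n ℂ} (hρ : IsDensity ρ) : (ρ * ρ).trace.re ≤ 1 := by
  obtain ⟨hpos, htrace⟩ := hρ
  have hsum : ∑ i, hpos.1.eigenvalues i = 1 := by
    simpa [hpos.1.trace_eq_sum_eigenvalues] using congrArg Complex.re htrace
  calc (ρ * ρ).trace.re = ∑ i, hpos.1.eigenvalues i ^ 2 := hpos.1.re_trace_mul_self
    _ ≤ (∑ i, hpos.1.eigenvalues i) ^ 2 :=
      Finset.sum_sq_le_sq_sum_of_nonneg fun i _ => hpos.eigenvalues_nonneg i
    _ = 1 := by rw [hsum, one_pow]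

lemma re_trace_sub_mul_sub_le_two_mul_one_sub_FN {n : Type*} [Fintype n] {ρ σ : Matrix n n ℂ}
    (hρ : (ρ * ρ).trace.re ≤ 1) (hσ : (σ * σ).trace.re ≤ 1) :
    ((ρ - σ) * (ρ - σ)).trace.re ≤ 2 * (1 - FN ρ σ) := by
  have hexpand : ((ρ - σ) * (ρ - σ)).trace.re =
      (ρ * ρ).trace.re + (σ * σ).trace.re - 2 * (ρ * σ).trace.re := by
    rw [sub_mul, mul_sub, mul_sub, trace_sub, trace_sub, trace_sub, trace_mul_comm σ ρ]
    simp only [Complex.sub_re]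
    ring
  have hamgm : 2 * (√(1 - (ρ * ρ).trace.re) * √(1 - (σ * σ).trace.re)) ≤
      (1 - (ρ * ρ).trace.re) + (1 - (σ * σ).trace.re) := by
    have h := two_mul_le_add_sq √(1 - (ρ * ρ).trace.re) √(1 - (σ * σ).trace.re)
    rwa [Real.sq_sqrt (by linarith), Real.sq_sqrt (by linarith), mul_assoc] at h
  rw [hexpand, FN]
  linarith

theorem stmt_9 {n : Type*} [Fintype n] [DecidableEq n]
    (ρ σ : Matrix n n ℂ) (hρ : IsDensity ρ) (hσ : IsDensity σ) :
    (1 / 2) * traceNorm (ρ - σ) ≤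
      Real.sqrt (((ρ - σ).rank : ℝ) / 2) * Real.sqrt (1 - FN ρ σ) := by
  have hHS := re_trace_sub_mul_sub_le_two_mul_one_sub_FN hρ.re_trace_mul_self_le_one
    hσ.re_trace_mul_self_le_one
  have htr := (hρ.1.1.sub hσ.1.1).traceNorm_sq_le_rank_mul_re_trace_mul_self
  rw [← Real.sqrt_mul (by positivity)]
  refine (le_abs_self _).trans (Real.abs_le_sqrt ?_)
  calc (1 / 2 * traceNorm (ρ - σ)) ^ 2 = traceNorm (ρ - σ) ^ 2 / 4 := by ring
    _ ≤ (ρ - σ).rank * (2 * (1 - FN ρ σ)) / 4 := by grw [htr, hHS]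
    _ = (ρ - σ).rank / 2 * (1 - FN ρ σ) := by ring
end
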